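/- Let d ≥ 2 be an integer, let e_1 be the first standard basis vector of ℝ^d, and let 0 < a < b ≤ 1 be reals. Then (v_{d−1} · (1−a²)^{(d−1)/2} / d) · (b−a) ≤ vol_d(B(e_1, 1, a, b)), where vol_d is Lebesgue measure on ℝ^d. -/

import Mathlib

open MeasureTheory Filter

/-- `vball n` is the Lebesgue volume of the closed unit Euclidean ball in ℝⁿ. -/
noncomputable def vball (n : ℕ) : ℝ :=
  (volume (Metric.closedBall (0 : EuclideanSpace ℝ (Fin n)) 1)).toReal

/-- The ballSlice B(x, r, a, b) of the ball B(x, r). -/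
noncomputable def ballSlice (d : ℕ) (x : EuclideanSpace ℝ (Fin d)) (r a b : ℝ) :
    Set (EuclideanSpace ℝ (Fin d)) :=
  if 0 < a then
    {y | ‖y - x‖ ≤ r ∧ a * r < (inner ℝ (y - x) (‖x‖⁻¹ • x) : ℝ) ∧
      (inner ℝ (y - x) (‖x‖⁻¹ • x) : ℝ) ≤ b * r}
  else
    {y | ‖y - x‖ ≤ r ∧ (inner ℝ (y - x) (‖x‖⁻¹ • x) : ℝ) ≤ b * r}

/-!
After translating by `-e₁` the slice becomes the part of the unit ball over the heights `(a, b]`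
of the first coordinate. By convexity it contains the corresponding part of the cone with apex
`e₁` over the section of the ball at height `a`, whose cross-section at height `t` is a
`(d-1)`-ball of radius `√(1-a²) (1-t) / (1-a)`. Cavalieri's principle bounds the volume below by
`v_{d-1} (1-a²)^{(d-1)/2} ∫_a^b ((1-t)/(1-a))^{d-1} dt`, and because the cross-sections of the
cone shrink, its part over `(a, b]` has at least the fraction `(b-a)/(1-a)` of its volume.
-/

def unitBallSlab {d : ℕ} (i : Fin d) (s : Set ℝ) : Set (EuclideanSpace ℝ (Fin d)) :=
  {z | ‖z‖ ≤ 1 ∧ z i ∈ s}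

section Slab

variable {n : ℕ}

def splitCoord (i : Fin (n + 1)) (z : EuclideanSpace ℝ (Fin (n + 1))) :
    ℝ × EuclideanSpace ℝ (Fin n) :=
  (z i, WithLp.toLp 2 fun j => z (i.succAbove j))

theorem measurePreserving_splitCoord (i : Fin (n + 1)) :
    MeasurePreserving (splitCoord i) volume volume := by
  rw [Measure.volume_eq_prod]
  exact ((MeasurePreserving.id volume).prod
    (EuclideanSpace.volume_preserving_symm_measurableEquiv_toLp (Fin n)).symm).comp
    ((volume_preserving_piFinSuccAbove (fun _ => ℝ) i).comp
      (EuclideanSpace.volume_preserving_symm_measurableEquiv_toLp _))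

theorem norm_sq_eq_splitCoord (i : Fin (n + 1)) (z : EuclideanSpace ℝ (Fin (n + 1))) :
    ‖z‖ ^ 2 = (splitCoord i z).1 ^ 2 + ‖(splitCoord i z).2‖ ^ 2 := by
  simp only [splitCoord, EuclideanSpace.norm_sq_eq, Real.norm_eq_abs, sq_abs]
  exact Fin.sum_univ_succAbove (fun j => z j ^ 2) i

theorem volume_unitBallSlab (i : Fin (n + 1)) {s : Set ℝ} (hs : MeasurableSet s) :
    volume (unitBallSlab i s) =
      ∫⁻ t in s, volume {y : EuclideanSpace ℝ (Fin n) | t ^ 2 + ‖y‖ ^ 2 ≤ 1} := by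
  set B : Set (ℝ × EuclideanSpace ℝ (Fin n)) :=
    {p | p.1 ∈ s ∧ p.1 ^ 2 + ‖p.2‖ ^ 2 ≤ 1}
  have hB : MeasurableSet B :=
    (measurable_fst hs).inter <| measurableSet_le
      (f := fun p : ℝ × EuclideanSpace ℝ (Fin n) => p.1 ^ 2 + ‖p.2‖ ^ 2) (by fun_prop)
      measurable_const
  have hpre : unitBallSlab i s = splitCoord i ⁻¹' B := by
    ext z
    simp only [unitBallSlab, B, Set.mem_ofPred_eq, Set.mem_preimage, ← norm_sq_eq_splitCoord,
      sq_le_one_iff₀ (norm_nonneg z)]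
    exact and_comm
  rw [hpre, (measurePreserving_splitCoord i).measure_preimage hB.nullMeasurableSet,
    Measure.volume_eq_prod, Measure.prod_apply hB, ← lintegral_indicator hs]
  congr 1 with t
  by_cases ht : t ∈ s <;> simp [B, ht]

end Slab

section Cone

variable {a b t : ℝ}

/-- Radius at height `t` of the cone with apex at height `1` over the section of the unit sphere
at height `a`. -/
noncomputable def coneRadius (a t : ℝ) : ℝ := √(1 - a ^ 2) / (1 - a) * (1 - t)

theorem coneRadius_nonneg (ha : a ≤ 1) (ht : t ≤ 1) : 0 ≤ coneRadius a t :=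
  mul_nonneg (div_nonneg (Real.sqrt_nonneg _) (by linarith)) (by linarith)

theorem sq_coneRadius_le (ha : -1 ≤ a) (ha₁ : a < 1) (hat : a ≤ t) (ht : t ≤ 1) :
    coneRadius a t ^ 2 ≤ 1 - t ^ 2 := by
  have h1a : 0 < 1 - a := by linarith
  have hsq : coneRadius a t ^ 2 = (1 - a ^ 2) * (1 - t) ^ 2 / (1 - a) ^ 2 := by
    rw [coneRadius, mul_pow, div_pow, Real.sq_sqrt (by nlinarith)]
    ring
  rw [hsq, div_le_iff₀ (by positivity)]
  nlinarith [mul_nonneg (mul_nonneg h1a.le (sub_nonneg.2 ht)) (sub_nonneg.2 hat)]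

theorem closedBall_coneRadius_subset {E : Type*} [SeminormedAddCommGroup E]
    (ha : -1 ≤ a) (ha₁ : a < 1) (hat : a ≤ t) (ht : t ≤ 1) :
    Metric.closedBall (0 : E) (coneRadius a t) ⊆ {y | t ^ 2 + ‖y‖ ^ 2 ≤ 1} := by
  intro y hy
  rw [mem_closedBall_zero_iff] at hy
  have := pow_le_pow_left₀ (norm_nonneg y) hy 2
  have := sq_coneRadius_le ha ha₁ hat ht
  simp only [Set.mem_ofPred_eq]
  linarith

theorem le_intervalIntegral_one_sub_pow (n : ℕ) (hab : a ≤ b) (hb : b ≤ 1) :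
    (b - a) * (1 - a) ^ n / (n + 1) ≤ ∫ t in a..b, (1 - t) ^ n := by
  rw [intervalIntegral.integral_comp_sub_left (fun t => t ^ n), integral_pow]
  gcongr
  have : (1 - b) ^ n ≤ (1 - a) ^ n := pow_le_pow_left₀ (by linarith) (by linarith) n
  rw [pow_succ, pow_succ]
  nlinarith [mul_le_mul_of_nonneg_left this (by linarith : (0 : ℝ) ≤ 1 - b)]

theorem le_integral_coneRadius_pow (n : ℕ) (ha : -1 ≤ a) (hab : a < b) (hb : b ≤ 1) :
    (1 - a ^ 2) ^ ((n : ℝ) / 2) * (b - a) / (n + 1) ≤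
      ∫ t in Set.Ioc a b, coneRadius a t ^ n := by
  have h1a : 0 < 1 - a := by linarith
  have hsqrt : √(1 - a ^ 2) ^ n = (1 - a ^ 2) ^ ((n : ℝ) / 2) := by
    rw [Real.sqrt_eq_rpow, ← Real.rpow_natCast, ← Real.rpow_mul (by nlinarith)]
    ring_nf
  rw [← intervalIntegral.integral_of_le hab.le]
  simp only [coneRadius, mul_pow]
  rw [intervalIntegral.integral_const_mul, div_pow, ← hsqrt]
  calc √(1 - a ^ 2) ^ n * (b - a) / (n + 1)
      = √(1 - a ^ 2) ^ n / (1 - a) ^ n * ((b - a) * (1 - a) ^ n / (n + 1)) := by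
        field_simp
    _ ≤ _ := by gcongr; exact le_intervalIntegral_one_sub_pow n hab.le hb

end Cone

section Slice

variable {a b : ℝ}

theorem ballSlice_single_eq {d : ℕ} (i : Fin d) (ha : 0 < a) :
    ballSlice d (EuclideanSpace.single i 1) 1 a b =
      (· + -EuclideanSpace.single i 1) ⁻¹' unitBallSlab i (Set.Ioc a b) := by
  ext y
  simp [ballSlice, unitBallSlab, ha, EuclideanSpace.inner_single_right, ← sub_eq_add_neg]

theorem ofReal_mul_volume_closedBall_le_volume_unitBallSlab {n : ℕ} (i : Fin (n + 1))
    (ha : -1 ≤ a) (hab : a < b) (hb : b ≤ 1) :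
    ENNReal.ofReal ((1 - a ^ 2) ^ ((n : ℝ) / 2) * (b - a) / (n + 1)) *
        volume (Metric.closedBall (0 : EuclideanSpace ℝ (Fin n)) 1) ≤
      volume (unitBallSlab i (Set.Ioc a b)) := by
  have ha₁ : a < 1 := hab.trans_le hb
  have hcont : Continuous fun t => coneRadius a t ^ n := by unfold coneRadius; fun_prop
  have hnonneg : 0 ≤ᵐ[volume.restrict (Set.Ioc a b)] fun t => coneRadius a t ^ n := by
    filter_upwards [ae_restrict_mem measurableSet_Ioc] with t ht
    exact pow_nonneg (coneRadius_nonneg ha₁.le (ht.2.trans hb)) n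
  calc _ ≤ ENNReal.ofReal (∫ t in Set.Ioc a b, coneRadius a t ^ n) *
          volume (Metric.closedBall (0 : EuclideanSpace ℝ (Fin n)) 1) := by
        gcongr
        exact le_integral_coneRadius_pow n ha hab hb
    _ = ∫⁻ t in Set.Ioc a b,
          volume (Metric.closedBall (0 : EuclideanSpace ℝ (Fin n)) (coneRadius a t)) := by
        rw [ofReal_integral_eq_lintegral_ofReal hcont.integrableOn_Ioc hnonneg,
          ← lintegral_mul_const _ hcont.measurable.ennreal_ofReal]
        refine setLIntegral_congr_fun measurableSet_Ioc fun t ht => ?_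
        rw [Measure.addHaar_closedBall' _ _ (coneRadius_nonneg ha₁.le (ht.2.trans hb)),
          finrank_euclideanSpace_fin]
    _ ≤ ∫⁻ t in Set.Ioc a b,
          volume {y : EuclideanSpace ℝ (Fin n) | t ^ 2 + ‖y‖ ^ 2 ≤ 1} :=
        setLIntegral_mono' measurableSet_Ioc fun t ht =>
          measure_mono (closedBall_coneRadius_subset ha ha₁ ht.1.le (ht.2.trans hb))
    _ = _ := (volume_unitBallSlab i measurableSet_Ioc).symm

theorem le_volume_ballSlice_single {n : ℕ} (i : Fin (n + 1))
    (ha : 0 < a) (hab : a < b) (hb : b ≤ 1) :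
    vball n * (1 - a ^ 2) ^ ((n : ℝ) / 2) / (n + 1) * (b - a) ≤
      (volume (ballSlice (n + 1) (EuclideanSpace.single i 1) 1 a b)).toReal := by
  rw [ballSlice_single_eq i ha, measure_preimage_add_right]
  have hfinite : volume (unitBallSlab i (Set.Ioc a b)) ≠ ⊤ :=
    measure_ne_top_of_subset (fun z hz => mem_closedBall_zero_iff.2 hz.1)
      measure_closedBall_lt_top.ne
  rw [← ENNReal.ofReal_le_iff_le_toReal hfinite]
  convert ofReal_mul_volume_closedBall_le_volume_unitBallSlab i (by linarith) hab hb using 1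
  rw [vball, show ∀ v c : ℝ, v * c / (n + 1) * (b - a) = c * (b - a) / (n + 1) * v by
      intros; ring,
    ENNReal.ofReal_mul' ENNReal.toReal_nonneg,
    ENNReal.ofReal_toReal measure_closedBall_lt_top.ne]

end Slice

/-- For d ≥ 2, e₁ the first standard basis vector of ℝ^d and 0 < a < b ≤ 1,
(v_{d−1} · (1−a²)^{(d−1)/2} / d) · (b−a) ≤ vol_d(B(e₁,1,a,b)). -/
theorem volume_slice_lower_bound (d : ℕ) (hd : 2 ≤ d) (a b : ℝ)
    (ha : 0 < a) (hab : a < b) (hb : b ≤ 1) :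
    vball (d - 1) * (1 - a ^ 2) ^ (((d : ℝ) - 1) / 2) / (d : ℝ) * (b - a) ≤
      (volume (ballSlice d (EuclideanSpace.single (⟨0, by omega⟩ : Fin d) (1 : ℝ)) 1 a b)).toReal := by
  obtain ⟨n, rfl⟩ : ∃ n, d = n + 1 := ⟨d - 1, by omega⟩
  convert le_volume_ballSlice_single _ ha hab hb using 3 <;> simp
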